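/- arXiv:1705.00765 — 2 statements merged into one kernel-verified Lean document; each statement's English description precedes it below -/
import Mathlib

section
/- (Li–Yau estimate on the flat torus.) Let n ≥ 1 and let f : (0,∞) × ℝⁿ → ℝ be a smooth positive solution of the heat equation ∂f/∂t = Δf that is ℤⁿ-periodic in the space variable. Let v = −ln f − (n/2)ln(4πt). Then 2Δv − n/t ≤ 0 for all t > 0 and all x ∈ ℝⁿ; equivalently, |∇f|²/f² − (∂f/∂t)/f ≤ n/(2t). -/
open MeasureTheory Real

noncomputable section

/-- Partial derivative of `g` at `x` in the `i`-th coordinate direction. -/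
def pd {n : ℕ} (i : Fin n) (g : (Fin n → ℝ) → ℝ) (x : Fin n → ℝ) : ℝ :=
  fderiv ℝ g x (Pi.single i 1)

/-- Squared Euclidean norm of the (spatial) gradient of `g` at `x`. -/
def gradSq {n : ℕ} (g : (Fin n → ℝ) → ℝ) (x : Fin n → ℝ) : ℝ :=
  ∑ i, (pd i g x) ^ 2

/-- The (spatial) Laplacian of `g` at `x`. -/
def lap {n : ℕ} (g : (Fin n → ℝ) → ℝ) (x : Fin n → ℝ) : ℝ :=
  ∑ i, pd i (pd i g) x

/-- The `(i,j)` entry of the Hessian of `g` at `x`. -/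
def hess {n : ℕ} (i j : Fin n) (g : (Fin n → ℝ) → ℝ) (x : Fin n → ℝ) : ℝ :=
  pd i (pd j g) x

/-!
The maximum-principle proof of Li and Yau. Write `u = log f`; then `∂ₜu = Δu + |∇u|²`, so the
Li–Yau quantity is `w = |∇u|² - ∂ₜu = -Δu`, and Bochner's formula gives
`∂ₜ(Δu) = Δ(Δu) + 2|∇²u|² + 2⟨∇u, ∇Δu⟩`. By periodicity, `Φ = (t - ε) w` attains its maximum
over `[ε, T] × ℝⁿ`. At a maximum point with `t > ε` we have `∇w = 0`, `Δw ≤ 0` and `∂ₜΦ ≥ 0`,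
which together with `|∇²u|² ≥ (Δu)² / n` force `Φ ≤ n / 2`; letting `ε → 0` gives `t w ≤ n / 2`.

Functions of `(t, x)` are treated as functions on `ℝ × ℝⁿ`, where `∂ₜ` is `dirDeriv timeDir`
and the spatial Laplacian is `lapAlong spaceDir`.
-/

open Filter Topology Set
open scoped ContDiff

section DirDeriv

variable {E : Type*} [NormedAddCommGroup E] [NormedSpace ℝ E]

def dirDeriv (e : E) (g : E → ℝ) (p : E) : ℝ := fderiv ℝ g p e

variable {Ω : Set E} {g h : E → ℝ} {p : E}

lemma ContDiffOn.dirDeriv (hΩ : IsOpen Ω) (hg : ContDiffOn ℝ ∞ g Ω) (e : E) :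
    ContDiffOn ℝ ∞ (dirDeriv e g) Ω :=
  (hg.fderiv_of_isOpen hΩ (by simp)).clm_apply contDiffOn_const

lemma ContDiffOn.differentiableAt_of_isOpen (hΩ : IsOpen Ω) (hg : ContDiffOn ℝ ∞ g Ω)
    (hp : p ∈ Ω) : DifferentiableAt ℝ g p :=
  (hg.differentiableOn (by simp)).differentiableAt (hΩ.mem_nhds hp)

lemma Filter.EventuallyEq.dirDeriv_eq (hgh : g =ᶠ[𝓝 p] h) (e : E) :
    dirDeriv e g p = dirDeriv e h p := by
  rw [dirDeriv, dirDeriv, hgh.fderiv_eq]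

lemma dirDeriv_congr_of_isOpen (hΩ : IsOpen Ω) (hgh : EqOn g h Ω) (hp : p ∈ Ω) (e : E) :
    dirDeriv e g p = dirDeriv e h p :=
  (eventuallyEq_of_mem (hΩ.mem_nhds hp) hgh).dirDeriv_eq e

lemma dirDeriv_comm (hΩ : IsOpen Ω) (hg : ContDiffOn ℝ ∞ g Ω) (hp : p ∈ Ω) (e e' : E) :
    dirDeriv e (dirDeriv e' g) p = dirDeriv e' (dirDeriv e g) p := by
  have hg' : ContDiffAt ℝ ∞ g p := hg.contDiffAt (hΩ.mem_nhds hp)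
  have hD : DifferentiableAt ℝ (fderiv ℝ g) p :=
    (hg'.fderiv_right (m := 1) (by norm_cast)).differentiableAt one_ne_zero
  have key : ∀ a b : E, dirDeriv a (dirDeriv b g) p = fderiv ℝ (fderiv ℝ g) p a b := by
    intro a b
    change fderiv ℝ (fun q => fderiv ℝ g q b) p a = _
    simp [fderiv_clm_apply hD (differentiableAt_const b)]
  rw [key, key, hg'.isSymmSndFDerivAt (by rw [minSmoothness_of_isRCLikeNormedField]; norm_cast)]

lemma dirDeriv_add_right_eq {c : E} (hΩ : IsOpen Ω) (hper : ∀ q ∈ Ω, g (q + c) = g q)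
    (hp : p ∈ Ω) (e : E) : dirDeriv e g (p + c) = dirDeriv e g p := by
  rw [dirDeriv, ← fderiv_comp_add_right]
  exact (eventuallyEq_of_mem (hΩ.mem_nhds hp) hper).dirDeriv_eq e

lemma dirDeriv_smul (c : ℝ) (e : E) (g : E → ℝ) (p : E) :
    dirDeriv (c • e) g p = c * dirDeriv e g p := by
  simp [dirDeriv]

lemma dirDeriv_const (c : ℝ) (e p : E) : dirDeriv e (fun _ => c) p = 0 := by
  simp [dirDeriv]

lemma dirDeriv_add (hg : DifferentiableAt ℝ g p) (hh : DifferentiableAt ℝ h p) (e : E) :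
    dirDeriv e (fun q => g q + h q) p = dirDeriv e g p + dirDeriv e h p := by
  simp [dirDeriv, fderiv_fun_add hg hh]

lemma dirDeriv_sub (hg : DifferentiableAt ℝ g p) (hh : DifferentiableAt ℝ h p) (e : E) :
    dirDeriv e (fun q => g q - h q) p = dirDeriv e g p - dirDeriv e h p := by
  simp [dirDeriv, fderiv_fun_sub hg hh]

lemma dirDeriv_neg (e : E) : dirDeriv e (fun q => -g q) = fun q => -dirDeriv e g q := by
  ext q
  simp [dirDeriv, fderiv_fun_neg]

lemma dirDeriv_const_mul (c : ℝ) (hg : DifferentiableAt ℝ g p) (e : E) :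
    dirDeriv e (fun q => c * g q) p = c * dirDeriv e g p := by
  simp [dirDeriv, fderiv_const_mul hg]

lemma dirDeriv_mul (hg : DifferentiableAt ℝ g p) (hh : DifferentiableAt ℝ h p) (e : E) :
    dirDeriv e (fun q => g q * h q) p = dirDeriv e g p * h p + g p * dirDeriv e h p := by
  simp [dirDeriv, fderiv_fun_mul hg hh]
  ring

lemma dirDeriv_sq (hg : DifferentiableAt ℝ g p) (e : E) :
    dirDeriv e (fun q => g q ^ 2) p = 2 * g p * dirDeriv e g p := by
  simp [dirDeriv, fderiv_fun_pow 2 hg]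

lemma dirDeriv_log (hg : DifferentiableAt ℝ g p) (hgp : g p ≠ 0) (e : E) :
    dirDeriv e (fun q => Real.log (g q)) p = dirDeriv e g p / g p := by
  simp [dirDeriv, (hg.hasFDerivAt.log hgp).fderiv, div_eq_inv_mul]

lemma dirDeriv_sum {ι : Type*} {s : Finset ι} {A : ι → E → ℝ}
    (hA : ∀ i ∈ s, DifferentiableAt ℝ (A i) p) (e : E) :
    dirDeriv e (fun q => ∑ i ∈ s, A i q) p = ∑ i ∈ s, dirDeriv e (A i) p := by
  simp [dirDeriv, fderiv_fun_sum hA]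

end DirDeriv

section Laplacian

variable {E : Type*} [NormedAddCommGroup E] [NormedSpace ℝ E] {ι : Type*} [Fintype ι]
  {Ω : Set E} {g h : E → ℝ} {p : E}

def lapAlong (e : ι → E) (g : E → ℝ) (p : E) : ℝ := ∑ i, dirDeriv (e i) (dirDeriv (e i) g) p

def gradSqAlong (e : ι → E) (g : E → ℝ) (p : E) : ℝ := ∑ i, dirDeriv (e i) g p ^ 2

def hessSqAlong (e : ι → E) (g : E → ℝ) (p : E) : ℝ :=
  ∑ i, ∑ j, dirDeriv (e i) (dirDeriv (e j) g) p ^ 2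

variable (e : ι → E)

lemma ContDiffOn.lapAlong (hΩ : IsOpen Ω) (hg : ContDiffOn ℝ ∞ g Ω) :
    ContDiffOn ℝ ∞ (lapAlong e g) Ω :=
  ContDiffOn.sum fun i _ => ((hg.dirDeriv hΩ (e i)).dirDeriv hΩ (e i))

lemma ContDiffOn.gradSqAlong (hΩ : IsOpen Ω) (hg : ContDiffOn ℝ ∞ g Ω) :
    ContDiffOn ℝ ∞ (gradSqAlong e g) Ω :=
  ContDiffOn.sum fun i _ => (hg.dirDeriv hΩ (e i)).pow 2

lemma lapAlong_congr (hΩ : IsOpen Ω) (hgh : EqOn g h Ω) (hp : p ∈ Ω) :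
    lapAlong e g p = lapAlong e h p :=
  Finset.sum_congr rfl fun i _ => dirDeriv_congr_of_isOpen hΩ
    (fun _ hq => dirDeriv_congr_of_isOpen hΩ hgh hq (e i)) hp (e i)

lemma lapAlong_add_right_eq {c : E} (hΩ : IsOpen Ω) (hper : ∀ q ∈ Ω, g (q + c) = g q)
    (hp : p ∈ Ω) : lapAlong e g (p + c) = lapAlong e g p :=
  Finset.sum_congr rfl fun i _ => dirDeriv_add_right_eq hΩ
    (fun _ hq => dirDeriv_add_right_eq hΩ hper hq (e i)) hp (e i)

lemma lapAlong_add (hΩ : IsOpen Ω) (hg : ContDiffOn ℝ ∞ g Ω) (hh : ContDiffOn ℝ ∞ h Ω)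
    (hp : p ∈ Ω) : lapAlong e (fun q => g q + h q) p = lapAlong e g p + lapAlong e h p := by
  rw [lapAlong, lapAlong, lapAlong, ← Finset.sum_add_distrib]
  refine Finset.sum_congr rfl fun i _ => ?_
  have hD : EqOn (dirDeriv (e i) fun q => g q + h q)
      (fun q => dirDeriv (e i) g q + dirDeriv (e i) h q) Ω := fun q hq =>
    dirDeriv_add (hg.differentiableAt_of_isOpen hΩ hq) (hh.differentiableAt_of_isOpen hΩ hq) _
  rw [dirDeriv_congr_of_isOpen hΩ hD hp, dirDeriv_add
    ((hg.dirDeriv hΩ _).differentiableAt_of_isOpen hΩ hp)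
    ((hh.dirDeriv hΩ _).differentiableAt_of_isOpen hΩ hp)]

lemma lapAlong_dirDeriv (hΩ : IsOpen Ω) (hg : ContDiffOn ℝ ∞ g Ω) (hp : p ∈ Ω) (d : E) :
    lapAlong e (dirDeriv d g) p = dirDeriv d (lapAlong e g) p := by
  unfold lapAlong
  rw [dirDeriv_sum fun i _ =>
    (((hg.dirDeriv hΩ _).dirDeriv hΩ _).differentiableAt_of_isOpen hΩ hp)]
  refine Finset.sum_congr rfl fun i _ => ?_
  rw [dirDeriv_congr_of_isOpen hΩ (fun q hq => dirDeriv_comm hΩ hg hq (e i) d) hp,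
    dirDeriv_comm hΩ (hg.dirDeriv hΩ _) hp]

lemma dirDeriv_gradSqAlong (hΩ : IsOpen Ω) (hg : ContDiffOn ℝ ∞ g Ω) (hp : p ∈ Ω) (d : E) :
    dirDeriv d (gradSqAlong e g) p
      = ∑ j, 2 * (dirDeriv (e j) g p * dirDeriv d (dirDeriv (e j) g) p) := by
  unfold gradSqAlong
  rw [dirDeriv_sum fun j _ =>
    ((hg.dirDeriv hΩ _).pow 2).differentiableAt_of_isOpen hΩ hp]
  refine Finset.sum_congr rfl fun j _ => ?_
  rw [dirDeriv_sq ((hg.dirDeriv hΩ _).differentiableAt_of_isOpen hΩ hp)]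
  ring

/-- Bochner's formula for a flat metric. -/
lemma lapAlong_gradSqAlong (hΩ : IsOpen Ω) (hg : ContDiffOn ℝ ∞ g Ω) (hp : p ∈ Ω) :
    lapAlong e (gradSqAlong e g) p
      = 2 * hessSqAlong e g p + 2 * ∑ j, dirDeriv (e j) g p * dirDeriv (e j) (lapAlong e g) p := by
  have hD (i j : ι) : ContDiffOn ℝ ∞ (dirDeriv (e i) (dirDeriv (e j) g)) Ω :=
    (hg.dirDeriv hΩ _).dirDeriv hΩ _
  have hterm (i j : ι) : dirDeriv (e i)
      (fun q => 2 * (dirDeriv (e j) g q * dirDeriv (e i) (dirDeriv (e j) g) q)) p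
      = 2 * (dirDeriv (e i) (dirDeriv (e j) g) p ^ 2
        + dirDeriv (e j) g p * dirDeriv (e i) (dirDeriv (e i) (dirDeriv (e j) g)) p) := by
    rw [dirDeriv_const_mul _ (((hg.dirDeriv hΩ _).mul (hD i j)).differentiableAt_of_isOpen hΩ hp),
      dirDeriv_mul ((hg.dirDeriv hΩ _).differentiableAt_of_isOpen hΩ hp)
        ((hD i j).differentiableAt_of_isOpen hΩ hp)]
    ring
  have hsum (i : ι) : dirDeriv (e i) (dirDeriv (e i) (gradSqAlong e g)) p
      = ∑ j, 2 * (dirDeriv (e i) (dirDeriv (e j) g) p ^ 2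
        + dirDeriv (e j) g p * dirDeriv (e i) (dirDeriv (e i) (dirDeriv (e j) g)) p) := by
    rw [dirDeriv_congr_of_isOpen hΩ (fun q hq => dirDeriv_gradSqAlong e hΩ hg hq (e i)) hp,
      dirDeriv_sum fun j _ => (contDiffOn_const.mul
        ((hg.dirDeriv hΩ _).mul (hD i j))).differentiableAt_of_isOpen hΩ hp]
    exact Finset.sum_congr rfl fun j _ => hterm i j
  simp_rw [← lapAlong_dirDeriv e hΩ hg hp, lapAlong, hessSqAlong, hsum, Finset.mul_sum,
    Finset.sum_comm (γ := ι) (f := fun i j => _ * (_ * dirDeriv (e j) _ _)),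
    ← Finset.sum_add_distrib]
  exact Finset.sum_congr rfl fun i _ => Finset.sum_congr rfl fun j _ => by ring

end Laplacian

section HeatEquation

variable {E : Type*} [NormedAddCommGroup E] [NormedSpace ℝ E] {ι : Type*} [Fintype ι]
  {Ω : Set E} {F u : E → ℝ} {p : E} (e : ι → E) (τ : E)

lemma mul_lapAlong_log_add_gradSqAlong (hΩ : IsOpen Ω) (hF : ContDiffOn ℝ ∞ F Ω)
    (hF0 : ∀ q ∈ Ω, F q ≠ 0) (hp : p ∈ Ω) :
    F p * (lapAlong e (fun q => Real.log (F q)) p + gradSqAlong e (fun q => Real.log (F q)) p)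
      = lapAlong e F p := by
  have hu : ContDiffOn ℝ ∞ (fun q => Real.log (F q)) Ω := hF.log hF0
  have hFu (d : E) : EqOn (dirDeriv d F)
      (fun q => F q * dirDeriv d (fun q => Real.log (F q)) q) Ω := fun q hq => by
    beta_reduce
    rw [dirDeriv_log (hF.differentiableAt_of_isOpen hΩ hq) (hF0 q hq),
      mul_div_cancel₀ _ (hF0 q hq)]
  rw [lapAlong, lapAlong, gradSqAlong, mul_add, Finset.mul_sum, Finset.mul_sum,
    ← Finset.sum_add_distrib]
  refine Finset.sum_congr rfl fun i _ => ?_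
  rw [dirDeriv_congr_of_isOpen hΩ (hFu (e i)) hp, dirDeriv_mul
    (hF.differentiableAt_of_isOpen hΩ hp) ((hu.dirDeriv hΩ _).differentiableAt_of_isOpen hΩ hp),
    hFu (e i) hp]
  ring

lemma gradSqAlong_log (hF : DifferentiableAt ℝ F p) (hF0 : F p ≠ 0) :
    gradSqAlong e (fun q => Real.log (F q)) p = gradSqAlong e F p / F p ^ 2 := by
  simp [gradSqAlong, dirDeriv_log hF hF0, div_pow, Finset.sum_div]

lemma dirDeriv_log_of_heat (hΩ : IsOpen Ω) (hF : ContDiffOn ℝ ∞ F Ω) (hF0 : ∀ q ∈ Ω, F q ≠ 0)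
    (hheat : ∀ q ∈ Ω, dirDeriv τ F q = lapAlong e F q) (hp : p ∈ Ω) :
    dirDeriv τ (fun q => Real.log (F q)) p
      = lapAlong e (fun q => Real.log (F q)) p + gradSqAlong e (fun q => Real.log (F q)) p := by
  have hFp := hF0 p hp
  rw [dirDeriv_log (hF.differentiableAt_of_isOpen hΩ hp) hFp, hheat p hp,
    ← mul_lapAlong_log_add_gradSqAlong e hΩ hF hF0 hp, mul_div_cancel_left₀ _ hFp]

lemma dirDeriv_lapAlong_of_log_heat (hΩ : IsOpen Ω) (hu : ContDiffOn ℝ ∞ u Ω)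
    (hpde : ∀ q ∈ Ω, dirDeriv τ u q = lapAlong e u q + gradSqAlong e u q) (hp : p ∈ Ω) :
    dirDeriv τ (lapAlong e u) p = lapAlong e (lapAlong e u) p + 2 * hessSqAlong e u p
      + 2 * ∑ j, dirDeriv (e j) u p * dirDeriv (e j) (lapAlong e u) p := by
  rw [← lapAlong_dirDeriv e hΩ hu hp, lapAlong_congr e hΩ hpde hp,
    lapAlong_add e hΩ (hu.lapAlong e hΩ) (hu.gradSqAlong e hΩ) hp,
    lapAlong_gradSqAlong e hΩ hu hp]
  ring

lemma sq_lapAlong_le_card_mul_hessSqAlong (g : E → ℝ) (p : E) :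
    lapAlong e g p ^ 2 ≤ Fintype.card ι * hessSqAlong e g p := by
  calc lapAlong e g p ^ 2
      ≤ Fintype.card ι * ∑ i, dirDeriv (e i) (dirDeriv (e i) g) p ^ 2 :=
        sq_sum_le_card_mul_sum_sq
    _ ≤ Fintype.card ι * hessSqAlong e g p := by
        refine mul_le_mul_of_nonneg_left (Finset.sum_le_sum fun i _ => ?_) (Nat.cast_nonneg _)
        exact Finset.single_le_sum (f := fun j => dirDeriv (e i) (dirDeriv (e j) g) p ^ 2)
          (fun j _ => sq_nonneg _) (Finset.mem_univ i)

end HeatEquation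

lemma IsLocalMax.hasDerivAt_deriv_nonpos {g g' : ℝ → ℝ} {a d : ℝ} (hmax : IsLocalMax g a)
    (hg : ∀ᶠ s in 𝓝 a, HasDerivAt g (g' s) s) (hg' : HasDerivAt g' d a) : d ≤ 0 := by
  by_contra! hd
  have hderiv : deriv g =ᶠ[𝓝 a] g' := hg.mono fun s hs => hs.deriv
  have hmin : IsLocalMin g a := isLocalMin_of_deriv_deriv_pos
    (by rwa [hderiv.deriv_eq, hg'.deriv])
    (by rw [hderiv.eq_of_nhds]; exact hmax.hasDerivAt_eq_zero hg.self_of_nhds)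
    hg.self_of_nhds.continuousAt
  have hconst : g =ᶠ[𝓝 a] fun _ => g a :=
    (hmin.and hmax).mono fun s hs => le_antisymm hs.2 hs.1
  have hzero : g' =ᶠ[𝓝 a] fun _ => 0 := by
    filter_upwards [hconst.eventuallyEq_nhds, hderiv] with s hs hs'
    rw [← hs', hs.deriv_eq, deriv_const]
  exact hd.ne' ((hg'.congr_of_eventuallyEq hzero.symm).unique (hasDerivAt_const a 0))

section Extremum

variable {E : Type*} [NormedAddCommGroup E] [NormedSpace ℝ E] {Ω : Set E} {g : E → ℝ}
  {p e : E}

lemma hasDerivAt_comp_add_smul (s : ℝ) (hg : DifferentiableAt ℝ g (p + s • e)) :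
    HasDerivAt (fun s : ℝ => g (p + s • e)) (dirDeriv e g (p + s • e)) s := by
  have hline : HasDerivAt (fun s : ℝ => p + s • e) e s := by
    simpa using ((hasDerivAt_id s).smul_const e).const_add p
  exact hg.hasFDerivAt.comp_hasDerivAt s hline

lemma dirDeriv_eq_zero_of_forall_le (hg : DifferentiableAt ℝ g p)
    (hmax : ∀ s : ℝ, g (p + s • e) ≤ g p) : dirDeriv e g p = 0 := by
  have hg0 : DifferentiableAt ℝ g (p + (0 : ℝ) • e) := by simpa using hg
  have hloc : IsLocalMax (fun s : ℝ => g (p + s • e)) 0 :=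
    Eventually.of_forall fun s => by simpa using hmax s
  simpa using hloc.hasDerivAt_eq_zero (hasDerivAt_comp_add_smul 0 hg0)

lemma dirDeriv_dirDeriv_nonpos_of_forall_le (hΩ : IsOpen Ω) (hg : ContDiffOn ℝ ∞ g Ω)
    (hp : p ∈ Ω) (hmax : ∀ s : ℝ, g (p + s • e) ≤ g p) : dirDeriv e (dirDeriv e g) p ≤ 0 := by
  have hline : ∀ᶠ s in 𝓝 (0 : ℝ), p + s • e ∈ Ω :=
    (Continuous.tendsto' (by fun_prop) 0 p (by simp)).eventually (hΩ.mem_nhds hp)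
  have hp0 : p + (0 : ℝ) • e ∈ Ω := by simpa using hp
  have hloc : IsLocalMax (fun s : ℝ => g (p + s • e)) 0 :=
    Eventually.of_forall fun s => by simpa using hmax s
  refine hloc.hasDerivAt_deriv_nonpos (hline.mono fun s hs =>
    hasDerivAt_comp_add_smul s (hg.differentiableAt_of_isOpen hΩ hs)) ?_
  simpa using hasDerivAt_comp_add_smul 0 ((hg.dirDeriv hΩ e).differentiableAt_of_isOpen hΩ hp0)

lemma dirDeriv_nonneg_of_isMaxOn_segment {q : E} (hg : DifferentiableAt ℝ g p)
    (hmax : IsMaxOn g (segment ℝ q p) p) : 0 ≤ dirDeriv (p - q) g p := by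
  have hcone : q - p ∈ posTangentConeAt (segment ℝ q p) p :=
    sub_mem_posTangentConeAt_of_segment_subset (segment_symm ℝ p q).subset
  have := hmax.localize.hasFDerivWithinAt_nonpos hg.hasFDerivAt.hasFDerivWithinAt hcone
  rw [← neg_sub, map_neg] at this
  exact neg_nonpos.1 this

end Extremum

/-- The algebra at an interior maximum point of `(t - ε) (-Δu)`: there `c = t - ε`, `L = Δu`,
`H = |∇²u|²`, `ΔL = Δ(Δu)` and `Lt = ∂ₜ(Δu)`. -/
lemma mul_neg_le_div_two_of_sq_le_mul {N c L H ΔL Lt : ℝ} (hN : 0 ≤ N) (hc : 0 < c)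
    (hH : L ^ 2 ≤ N * H) (hΔL : 0 ≤ ΔL) (hLt : Lt = ΔL + 2 * H) (htime : 0 ≤ -L + c * -Lt) : c * -L ≤ N / 2 := by
  subst hLt
  rcases le_or_gt (-L) 0 with hL | hL
  · nlinarith
  · have hW : 2 * c * H ≤ -L := by nlinarith
    nlinarith [mul_le_mul_of_nonneg_left hW hN, mul_le_mul_of_nonneg_left hH hc.le]

lemma dirDeriv_fst_sub_mul {F : Type*} [NormedAddCommGroup F] [NormedSpace ℝ F]
    {w : ℝ × F → ℝ} {q : ℝ × F} (ε : ℝ) (hw : DifferentiableAt ℝ w q) (e : ℝ × F) :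
    dirDeriv e (fun q => (q.1 - ε) * w q) q = e.1 * w q + (q.1 - ε) * dirDeriv e w q := by
  rw [dirDeriv_mul (by fun_prop) hw, dirDeriv_sub (by fun_prop) (by fun_prop), dirDeriv_const]
  simp [dirDeriv, fderiv_fst]

section SpaceTime

variable {n : ℕ}

def posTime (n : ℕ) : Set (ℝ × (Fin n → ℝ)) := Ioi 0 ×ˢ univ

def timeDir : ℝ × (Fin n → ℝ) := (1, 0)

def spaceDir (i : Fin n) : ℝ × (Fin n → ℝ) := (0, Pi.single i 1)

lemma isOpen_posTime : IsOpen (posTime n) := isOpen_Ioi.prod isOpen_univ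

lemma exists_isMaxOn_prod_univ_of_periodic {K : Set ℝ} (hK : IsCompact K) (hKne : K.Nonempty)
    {Φ : ℝ × (Fin n → ℝ) → ℝ} (hΦ : ContinuousOn Φ (K ×ˢ univ))
    (hper : ∀ m : Fin n → ℤ, ∀ q ∈ K ×ˢ univ, Φ (q + (0, fun i => (m i : ℝ))) = Φ q) :
    ∃ p₀ ∈ K ×ˢ univ, IsMaxOn Φ (K ×ˢ univ) p₀ := by
  obtain ⟨p₀, hp₀, hmax⟩ := (hK.prod (isCompact_Icc (a := (0 : Fin n → ℝ)) (b := 1))).exists_isMaxOn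
    (hKne.prod (nonempty_Icc.2 zero_le_one)) (hΦ.mono (prod_mono subset_rfl (subset_univ _)))
  refine ⟨p₀, ⟨hp₀.1, trivial⟩, fun q hq => ?_⟩
  have hfract : (q.1, fun i => Int.fract (q.2 i)) ∈ K ×ˢ Icc (0 : Fin n → ℝ) 1 :=
    ⟨hq.1, fun i => Int.fract_nonneg _, fun i => (Int.fract_lt_one _).le⟩
  have hq' : q = (q.1, fun i => Int.fract (q.2 i)) + (0, fun i => ((⌊q.2 i⌋ : ℤ) : ℝ)) := by
    ext <;> simp [Int.fract_add_floor]
  have := hper (fun i => ⌊q.2 i⌋) (q.1, fun i => Int.fract (q.2 i)) ⟨hq.1, trivial⟩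
  rw [← hq'] at this
  rw [mem_ofPred_eq, this]
  exact hmax hfract

end SpaceTime

section MaximumPrinciple

variable {n : ℕ} {w u : ℝ × (Fin n → ℝ) → ℝ} {ε T : ℝ} {p₀ : ℝ × (Fin n → ℝ)}

lemma dirDeriv_spaceDir_of_isMaxOn (hw : ContDiffOn ℝ ∞ w (posTime n)) (hε : 0 < ε)
    (hp₀ : p₀ ∈ Icc ε T ×ˢ univ) (hεp₀ : ε < p₀.1)
    (hmax : IsMaxOn (fun q => (q.1 - ε) * w q) (Icc ε T ×ˢ univ) p₀) (i : Fin n) :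
    dirDeriv (spaceDir i) w p₀ = 0 ∧ dirDeriv (spaceDir i) (dirDeriv (spaceDir i) w) p₀ ≤ 0 := by
  have hp₀' : p₀ ∈ posTime n := ⟨hε.trans hεp₀, trivial⟩
  have hΦ : ContDiffOn ℝ ∞ (fun q => (q.1 - ε) * w q) (posTime n) :=
    (contDiffOn_fst.sub contDiffOn_const).mul hw
  have hline (s : ℝ) : (fun q => (q.1 - ε) * w q) (p₀ + s • spaceDir i) ≤ (p₀.1 - ε) * w p₀ :=
    hmax ⟨by simpa [spaceDir] using hp₀.1, trivial⟩
  have hDΦ : EqOn (dirDeriv (spaceDir i) fun q => (q.1 - ε) * w q)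
      (fun q => (q.1 - ε) * dirDeriv (spaceDir i) w q) (posTime n) := fun q hq => by
    simp [dirDeriv_fst_sub_mul ε (hw.differentiableAt_of_isOpen isOpen_posTime hq), spaceDir]
  have hc : 0 < p₀.1 - ε := sub_pos.2 hεp₀
  constructor
  · have := dirDeriv_eq_zero_of_forall_le (hΦ.differentiableAt_of_isOpen isOpen_posTime hp₀')
      hline
    rw [hDΦ hp₀'] at this
    exact (mul_eq_zero.1 this).resolve_left hc.ne'
  · have := dirDeriv_dirDeriv_nonpos_of_forall_le isOpen_posTime hΦ hp₀' hline
    rw [dirDeriv_congr_of_isOpen isOpen_posTime hDΦ hp₀', dirDeriv_fst_sub_mul ε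
      ((hw.dirDeriv isOpen_posTime _).differentiableAt_of_isOpen isOpen_posTime hp₀')] at this
    simp only [spaceDir, zero_mul, zero_add] at this
    exact nonpos_of_mul_nonpos_right this hc

lemma dirDeriv_timeDir_of_isMaxOn (hw : ContDiffOn ℝ ∞ w (posTime n)) (hε : 0 < ε)
    (hp₀ : p₀ ∈ Icc ε T ×ˢ univ) (hεp₀ : ε < p₀.1)
    (hmax : IsMaxOn (fun q => (q.1 - ε) * w q) (Icc ε T ×ˢ univ) p₀) :
    0 ≤ w p₀ + (p₀.1 - ε) * dirDeriv timeDir w p₀ := by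
  have hp₀' : p₀ ∈ posTime n := ⟨hε.trans hεp₀, trivial⟩
  have hdiff := hw.differentiableAt_of_isOpen isOpen_posTime hp₀'
  have hseg : segment ℝ (ε, p₀.2) p₀ ⊆ Icc ε T ×ˢ univ :=
    ((convex_Icc ε T).prod convex_univ).segment_subset
      ⟨⟨le_rfl, hεp₀.le.trans hp₀.1.2⟩, trivial⟩ hp₀
  have hdir : p₀ - (ε, p₀.2) = (p₀.1 - ε) • timeDir := by
    ext <;> simp [timeDir]
  have := dirDeriv_nonneg_of_isMaxOn_segment
    (((contDiffOn_fst.sub contDiffOn_const).mul hw).differentiableAt_of_isOpen isOpen_posTime hp₀')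
    (hmax.on_subset hseg)
  rw [hdir, dirDeriv_smul, dirDeriv_fst_sub_mul ε hdiff] at this
  simpa [timeDir] using nonneg_of_mul_nonneg_right this (sub_pos.2 hεp₀)

end MaximumPrinciple

section LiYau

variable {n : ℕ} {u : ℝ × (Fin n → ℝ) → ℝ}

lemma mul_neg_lapAlong_le_of_log_heat (hu : ContDiffOn ℝ ∞ u (posTime n))
    (hpde : ∀ q ∈ posTime n,
      dirDeriv timeDir u q = lapAlong spaceDir u q + gradSqAlong spaceDir u q)
    (hper : ∀ m : Fin n → ℤ, ∀ q ∈ posTime n, u (q + (0, fun i => (m i : ℝ))) = u q)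
    {ε T : ℝ} (hε : 0 < ε) (hεT : ε ≤ T) (x : Fin n → ℝ) :
    (T - ε) * -lapAlong spaceDir u (T, x) ≤ n / 2 := by
  set L := lapAlong spaceDir u
  have hL : ContDiffOn ℝ ∞ L (posTime n) := hu.lapAlong spaceDir isOpen_posTime
  have hslab : Icc ε T ×ˢ (univ : Set (Fin n → ℝ)) ⊆ posTime n :=
    fun q hq => ⟨hε.trans_le hq.1.1, trivial⟩
  obtain ⟨p₀, hp₀, hmax⟩ := exists_isMaxOn_prod_univ_of_periodic (isCompact_Icc (a := ε) (b := T))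
    (nonempty_Icc.2 hεT) (Φ := fun q => (q.1 - ε) * -L q)
    ((((contDiffOn_fst.sub contDiffOn_const).mul hL.neg).continuousOn).mono hslab)
    fun m q hq => by
      simp [L, lapAlong_add_right_eq spaceDir isOpen_posTime (hper m) (hslab hq)]
  refine (hmax (⟨⟨hεT, le_rfl⟩, trivial⟩ : (T, x) ∈ Icc ε T ×ˢ univ)).trans ?_
  rcases hp₀.1.1.eq_or_lt with hεp₀ | hεp₀
  · simp only [← hεp₀, sub_self, zero_mul]
    positivity
  have hp₀' : p₀ ∈ posTime n := hslab hp₀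
  have hspace := dirDeriv_spaceDir_of_isMaxOn hL.neg hε hp₀ hεp₀ hmax
  simp only [dirDeriv_neg, neg_eq_zero, Left.neg_nonpos_iff] at hspace
  have htime := dirDeriv_timeDir_of_isMaxOn hL.neg hε hp₀ hεp₀ hmax
  rw [dirDeriv_neg] at htime
  have hΔL : 0 ≤ lapAlong spaceDir L p₀ := Finset.sum_nonneg fun i _ => (hspace i).2
  have hevol : dirDeriv timeDir L p₀ = lapAlong spaceDir L p₀ + 2 * hessSqAlong spaceDir u p₀ := by
    simp [L, dirDeriv_lapAlong_of_log_heat spaceDir timeDir isOpen_posTime hu hpde hp₀',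
      fun i => (hspace i).1]
  exact mul_neg_le_div_two_of_sq_le_mul (Nat.cast_nonneg n) (sub_pos.2 hεp₀)
    (by simpa using sq_lapAlong_le_card_mul_hessSqAlong spaceDir u p₀) hΔL hevol htime

lemma neg_lapAlong_le_of_log_heat (hu : ContDiffOn ℝ ∞ u (posTime n))
    (hpde : ∀ q ∈ posTime n,
      dirDeriv timeDir u q = lapAlong spaceDir u q + gradSqAlong spaceDir u q)
    (hper : ∀ m : Fin n → ℤ, ∀ q ∈ posTime n, u (q + (0, fun i => (m i : ℝ))) = u q)
    {t : ℝ} (ht : 0 < t) (x : Fin n → ℝ) :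
    -lapAlong spaceDir u (t, x) ≤ n / (2 * t) := by
  have hlim : Tendsto (fun ε => (t - ε) * -lapAlong spaceDir u (t, x)) (𝓝[>] 0)
      (𝓝 (t * -lapAlong spaceDir u (t, x))) := by
    have := ((continuous_const.sub continuous_id).mul continuous_const).tendsto (0 : ℝ)
      (f := fun ε : ℝ => (t - ε) * -lapAlong spaceDir u (t, x))
    simpa using this.mono_left nhdsWithin_le_nhds
  have hbound : t * -lapAlong spaceDir u (t, x) ≤ n / 2 := by
    refine le_of_tendsto hlim ?_
    filter_upwards [Ioo_mem_nhdsGT ht] with ε hε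
    exact mul_neg_lapAlong_le_of_log_heat hu hpde hper hε.1 hε.2.le x
  rw [le_div_iff₀ (by positivity)]
  linarith

end LiYau

section Slices

variable {n : ℕ} {g : ℝ × (Fin n → ℝ) → ℝ} {t : ℝ} {x : Fin n → ℝ}

lemma pd_eq_dirDeriv_spaceDir (hg : DifferentiableAt ℝ g (t, x)) (i : Fin n) :
    pd i (fun y => g (t, y)) x = dirDeriv (spaceDir i) g (t, x) := by
  have h : HasFDerivAt (fun y => g (t, y))
      ((fderiv ℝ g (t, x)).comp (ContinuousLinearMap.inr ℝ ℝ (Fin n → ℝ))) x :=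
    hg.hasFDerivAt.comp x ((hasFDerivAt_const t x).prodMk (hasFDerivAt_id x))
  rw [pd, h.fderiv]
  rfl

lemma deriv_eq_dirDeriv_timeDir (hg : DifferentiableAt ℝ g (t, x)) :
    deriv (fun s => g (s, x)) t = dirDeriv timeDir g (t, x) :=
  (hg.hasFDerivAt.comp_hasDerivAt t ((hasDerivAt_id t).prodMk (hasDerivAt_const t x))).deriv

lemma gradSq_eq_gradSqAlong (hg : DifferentiableAt ℝ g (t, x)) :
    gradSq (fun y => g (t, y)) x = gradSqAlong spaceDir g (t, x) := by
  simp [gradSq, gradSqAlong, pd_eq_dirDeriv_spaceDir hg]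

lemma lap_eq_lapAlong (hg : ContDiffOn ℝ ∞ g (posTime n)) (ht : 0 < t) (x : Fin n → ℝ) :
    lap (fun y => g (t, y)) x = lapAlong spaceDir g (t, x) := by
  have hdiff {h : ℝ × (Fin n → ℝ) → ℝ} (hh : ContDiffOn ℝ ∞ h (posTime n)) (y : Fin n → ℝ) :
      DifferentiableAt ℝ h (t, y) := hh.differentiableAt_of_isOpen isOpen_posTime ⟨ht, trivial⟩
  refine Finset.sum_congr rfl fun i _ => ?_
  rw [funext fun y => pd_eq_dirDeriv_spaceDir (hdiff hg y) i,
    pd_eq_dirDeriv_spaceDir (hdiff (hg.dirDeriv isOpen_posTime _) x)]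

lemma lap_neg_sub_const (g : (Fin n → ℝ) → ℝ) (c : ℝ) (x : Fin n → ℝ) :
    lap (fun y => -g y - c) x = -lap g x := by
  have hsub (h : (Fin n → ℝ) → ℝ) (i : Fin n) : pd i (fun y => h y - c) = pd i h :=
    funext fun y => by simp only [pd, fderiv_sub_const]
  have hneg (h : (Fin n → ℝ) → ℝ) (i : Fin n) : pd i (fun y => -h y) = fun y => -pd i h y :=
    funext fun y => by simp only [pd, fderiv_fun_neg, neg_apply]
  simp only [lap, hsub (fun y => -g y), hneg, Finset.sum_neg_distrib]

end Slices

theorem li_yau_estimate_general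
    (n : ℕ) (f : ℝ → (Fin n → ℝ) → ℝ)
    (hsmooth : ContDiffOn ℝ (⊤ : ℕ∞) (fun p : ℝ × (Fin n → ℝ) => f p.1 p.2)
      (Set.Ioi 0 ×ˢ Set.univ))
    (hpos : ∀ t > (0:ℝ), ∀ x : Fin n → ℝ, 0 < f t x)
    (hheat : ∀ t > (0:ℝ), ∀ x : Fin n → ℝ, deriv (fun s => f s x) t = lap (f t) x)
    (hper : ∀ t > (0:ℝ), ∀ x : Fin n → ℝ, ∀ m : Fin n → ℤ,
      f t (x + fun i => (m i : ℝ)) = f t x)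
    (v : ℝ → (Fin n → ℝ) → ℝ)
    (hv : ∀ t x, v t x = -Real.log (f t x) - (n / 2 : ℝ) * Real.log (4 * π * t)) :
    ∀ t > (0:ℝ), ∀ x : Fin n → ℝ,
      2 * lap (v t) x - n / t ≤ 0 ∧
      gradSq (f t) x / (f t x) ^ 2 - deriv (fun s => f s x) t / f t x ≤ n / (2 * t) := by
  intro t ht x
  set F : ℝ × (Fin n → ℝ) → ℝ := fun p => f p.1 p.2
  have htx : (t, x) ∈ posTime n := ⟨ht, trivial⟩
  have hdiff : DifferentiableAt ℝ F (t, x) :=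
    hsmooth.differentiableAt_of_isOpen isOpen_posTime htx
  have hF0 (q) (hq : q ∈ posTime n) : F q ≠ 0 := (hpos q.1 hq.1 q.2).ne'
  have hheatF (q) (hq : q ∈ posTime n) : dirDeriv timeDir F q = lapAlong spaceDir F q := by
    rw [← deriv_eq_dirDeriv_timeDir (hsmooth.differentiableAt_of_isOpen isOpen_posTime hq),
      ← lap_eq_lapAlong hsmooth hq.1]
    exact hheat q.1 hq.1 q.2
  have hlog (q) (hq : q ∈ posTime n) :=
    dirDeriv_log_of_heat spaceDir timeDir isOpen_posTime hsmooth hF0 hheatF hq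
  have hbound := neg_lapAlong_le_of_log_heat (hsmooth.log hF0) hlog
    (fun m q hq => by simp [F, hper q.1 hq.1 q.2 m]) ht x
  constructor
  · rw [funext (hv t), lap_neg_sub_const, lap_eq_lapAlong (hsmooth.log hF0) ht]
    rw [le_div_iff₀ (by positivity)] at hbound
    rw [sub_nonpos, le_div_iff₀ ht]
    linarith
  · rw [gradSq_eq_gradSqAlong hdiff, deriv_eq_dirDeriv_timeDir hdiff,
      ← gradSqAlong_log _ hdiff (hF0 _ htx), ← dirDeriv_log hdiff (hF0 _ htx), hlog _ htx]
    linarith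

/-- Corollary 3.3 (Li–Yau): for a positive periodic solution of the heat equation,
with `v = −ln f − (n/2)ln(4πt)`, one has `2Δv − n/t ≤ 0`; equivalently
`|∇f|²/f² − (∂f/∂t)/f ≤ n/(2t)`. -/
theorem li_yau_estimate
    (n : ℕ) (hn : 1 ≤ n) (f : ℝ → (Fin n → ℝ) → ℝ)
    (hsmooth : ContDiffOn ℝ (⊤ : ℕ∞) (fun p : ℝ × (Fin n → ℝ) => f p.1 p.2)
      (Set.Ioi 0 ×ˢ Set.univ))
    (hpos : ∀ t > (0:ℝ), ∀ x : Fin n → ℝ, 0 < f t x)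
    (hheat : ∀ t > (0:ℝ), ∀ x : Fin n → ℝ, deriv (fun s => f s x) t = lap (f t) x)
    (hper : ∀ t > (0:ℝ), ∀ x : Fin n → ℝ, ∀ m : Fin n → ℤ,
      f t (x + fun i => (m i : ℝ)) = f t x)
    (v : ℝ → (Fin n → ℝ) → ℝ)
    (hv : ∀ t x, v t x = -Real.log (f t x) - (n / 2 : ℝ) * Real.log (4 * π * t)) :
    ∀ t > (0:ℝ), ∀ x : Fin n → ℝ,
      2 * lap (v t) x - n / t ≤ 0 ∧
      gradSq (f t) x / (f t x) ^ 2 - deriv (fun s => f s x) t / f t x ≤ n / (2 * t) :=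
  li_yau_estimate_general n f hsmooth hpos hheat hper v hv
end
end

section
/- Let n ≥ 1 and let f : (0,∞) × ℝⁿ → ℝ be a smooth positive solution of the heat equation ∂f/∂t = Δf that is ℤⁿ-periodic in the space variable. Let u = −ln f and F(t) = ∫_{[0,1]ⁿ} (t²|∇u(t,x)|² − 2nt) e^{−u(t,x)} dx. Then F is differentiable on (0,∞) and dF/dt = −2t² ∫_{[0,1]ⁿ} ( |∇²u − (1/t)I|² + |∇u|²/t ) e^{−u} dx, which is ≤ 0. -/
open MeasureTheory Real

noncomputable section

/-!
Write `w = f t = exp (-u t)`. Differentiating under the integral sign, and commuting `∂ₜ` with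
`∂ᵢ` so that the heat equation gives `∂ₜ ∂ᵢ f = ∂ᵢ Δf`, yields
`F' t = ∫ 2t |∇u|² w - t² (2 ⟨∇u, ∇Δw⟩ + |∇u|² Δw) - 2n w - 2nt Δw`.
Expanding `|∇²u - I/t|² = |∇²u|² - 2Δu/t + n/t²` and using `Δw = (|∇u|² - Δu) w`, this
integrand differs from `-2t²` times the claimed one by `-t² D + (4 - 2n) t Δw`, where
`D = 2 ⟨∇u, ∇Δw⟩ + |∇u|² Δw - 2 |∇²u|² w` is, by a Bochner-type computation, the divergence of
the field `j ↦ ∑ᵢ ∂ᵢu (2 ∂ᵢ∂ⱼw + ∂ᵢu ∂ⱼw)`. Divergences of periodic fields integrate to zero over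
the unit cube, because the boundary terms of the divergence theorem cancel in pairs.
-/

open scoped ContDiff

section PartialDerivatives

variable {n : ℕ} {a b g : (Fin n → ℝ) → ℝ} {x : Fin n → ℝ}

theorem HasFDerivAt.pd_eq {g' : (Fin n → ℝ) →L[ℝ] ℝ} (h : HasFDerivAt g g' x) (i : Fin n) :
    pd i g x = g' (Pi.single i 1) := by
  rw [pd, h.fderiv]

theorem pd_neg (i : Fin n) : pd i (fun y => -g y) x = -pd i g x := by
  simp [pd]

theorem pd_mul (ha : DifferentiableAt ℝ a x) (hb : DifferentiableAt ℝ b x) (i : Fin n) :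
    pd i (fun y => a y * b y) x = pd i a x * b x + a x * pd i b x := by
  simp only [pd, fderiv_fun_mul ha hb, add_apply,
    smul_apply, smul_eq_mul]
  ring

theorem pd_add (ha : DifferentiableAt ℝ a x) (hb : DifferentiableAt ℝ b x) (i : Fin n) :
    pd i (fun y => a y + b y) x = pd i a x + pd i b x := by
  simp [pd, fderiv_fun_add ha hb]

theorem pd_const_mul (hg : DifferentiableAt ℝ g x) (c : ℝ) (i : Fin n) :
    pd i (fun y => c * g y) x = c * pd i g x := by
  simp [pd, fderiv_const_mul hg]

theorem pd_sum {ι : Type*} (s : Finset ι) {A : ι → (Fin n → ℝ) → ℝ}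
    (h : ∀ k ∈ s, DifferentiableAt ℝ (A k) x) (i : Fin n) :
    pd i (fun y => ∑ k ∈ s, A k y) x = ∑ k ∈ s, pd i (A k) x := by
  simp [pd, fderiv_fun_sum h]

@[fun_prop]
theorem ContDiff.pd (hg : ContDiff ℝ ∞ g) (i : Fin n) : ContDiff ℝ ∞ (pd i g) :=
  (hg.fderiv_right le_rfl).clm_apply contDiff_const

@[fun_prop]
theorem ContDiff.hess (hg : ContDiff ℝ ∞ g) (i j : Fin n) : ContDiff ℝ ∞ (hess i j g) :=
  (hg.pd j).pd i

@[fun_prop]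
theorem ContDiff.gradSq (hg : ContDiff ℝ ∞ g) : ContDiff ℝ ∞ (gradSq g) := by
  unfold _root_.gradSq
  fun_prop

@[fun_prop]
theorem ContDiff.lap (hg : ContDiff ℝ ∞ g) : ContDiff ℝ ∞ (lap g) := by
  unfold _root_.lap
  fun_prop

theorem pd_comm (hg : ContDiffAt ℝ 2 g x) (i j : Fin n) :
    pd i (pd j g) x = pd j (pd i g) x := by
  have hdiff : DifferentiableAt ℝ (fderiv ℝ g) x :=
    (hg.fderiv_right (m := 1) le_rfl).differentiableAt one_ne_zero
  have hsymm : IsSymmSndFDerivAt ℝ g x := hg.isSymmSndFDerivAt (by simp)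
  change fderiv ℝ (fun y => fderiv ℝ g y (Pi.single j 1)) x (Pi.single i 1)
    = fderiv ℝ (fun y => fderiv ℝ g y (Pi.single i 1)) x (Pi.single j 1)
  simpa [fderiv_clm_apply hdiff (differentiableAt_const _)] using hsymm _ _

theorem gradSq_nonneg (g : (Fin n → ℝ) → ℝ) (x : Fin n → ℝ) : 0 ≤ gradSq g x :=
  Finset.sum_nonneg fun _ _ => sq_nonneg _

end PartialDerivatives

section ExpNeg

variable {n : ℕ} {v w : (Fin n → ℝ) → ℝ}

theorem contDiff_of_eq_exp_neg (hv : ContDiff ℝ ∞ v) (hwv : ∀ y, w y = Real.exp (-v y)) :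
    ContDiff ℝ ∞ w := by
  rw [funext hwv]
  fun_prop

theorem Function.Periodic.of_eq_exp_neg {c : Fin n → ℝ} (hper : Function.Periodic v c)
    (hwv : ∀ y, w y = Real.exp (-v y)) : Function.Periodic w c := fun y => by
  rw [hwv, hwv, hper]

theorem pd_of_eq_exp_neg (hv : ContDiff ℝ ∞ v) (hwv : ∀ y, w y = Real.exp (-v y)) (i : Fin n)
    (x : Fin n → ℝ) : pd i w x = -(pd i v x * w x) := by
  obtain rfl : w = fun y => Real.exp (-v y) := funext hwv
  have hexp : HasFDerivAt (fun y => Real.exp (-v y)) (Real.exp (-v x) • -fderiv ℝ v x) x :=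
    (hv.differentiable (by simp) x).hasFDerivAt.neg.exp
  rw [hexp.pd_eq, pd]
  simp only [smul_neg, neg_apply, smul_apply,
    smul_eq_mul, neg_inj]
  ring

theorem gradSq_of_eq_exp_neg (hv : ContDiff ℝ ∞ v) (hwv : ∀ y, w y = Real.exp (-v y))
    (x : Fin n → ℝ) : gradSq w x = gradSq v x * w x ^ 2 := by
  simp only [gradSq, pd_of_eq_exp_neg hv hwv, Finset.sum_mul]
  exact Finset.sum_congr rfl fun i _ => by ring

theorem hess_of_eq_exp_neg (hv : ContDiff ℝ ∞ v) (hwv : ∀ y, w y = Real.exp (-v y))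
    (i j : Fin n) (x : Fin n → ℝ) :
    hess i j w x = (pd i v x * pd j v x - hess i j v x) * w x := by
  have hw := contDiff_of_eq_exp_neg hv hwv
  rw [hess, funext (pd_of_eq_exp_neg hv hwv j), pd_neg,
    pd_mul ((hv.pd j).differentiable (by simp) x) (hw.differentiable (by simp) x),
    pd_of_eq_exp_neg hv hwv, hess]
  ring

theorem lap_of_eq_exp_neg (hv : ContDiff ℝ ∞ v) (hwv : ∀ y, w y = Real.exp (-v y))
    (x : Fin n → ℝ) : lap w x = (gradSq v x - lap v x) * w x := by
  simp only [lap, gradSq, ← Finset.sum_sub_distrib, Finset.sum_mul]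
  refine Finset.sum_congr rfl fun i _ => ?_
  rw [← hess, hess_of_eq_exp_neg hv hwv, hess]
  ring

end ExpNeg

section Bochner

def fisherFlux {n : ℕ} (v w : (Fin n → ℝ) → ℝ) (j : Fin n) (y : Fin n → ℝ) : ℝ :=
  ∑ i, pd i v y * (2 * hess i j w y + pd i v y * pd j w y)

variable {n : ℕ} {v w : (Fin n → ℝ) → ℝ}

theorem pd_fisherFlux_summand_of_eq_exp_neg (hv : ContDiff ℝ ∞ v)
    (hwv : ∀ y, w y = Real.exp (-v y)) (i j : Fin n) (x : Fin n → ℝ) :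
    pd j (fun y => pd i v y * (2 * hess i j w y + pd i v y * pd j w y)) x
      = 2 * pd i v x * pd i (pd j (pd j w)) x + pd i v x ^ 2 * pd j (pd j w) x
        - 2 * hess i j v x ^ 2 * w x := by
  have hw := contDiff_of_eq_exp_neg hv hwv
  have hd : ∀ g : (Fin n → ℝ) → ℝ, ContDiff ℝ ∞ g → DifferentiableAt ℝ g x :=
    fun g hg => hg.differentiable (by simp) x
  have hwjji : pd j (hess i j w) x = pd i (pd j (pd j w)) x :=
    pd_comm ((hw.pd j).contDiffAt.of_le (by norm_cast)) j i
  have hvij : pd j (pd i v) x = hess i j v x := pd_comm (hv.contDiffAt.of_le (by norm_cast)) j i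
  rw [pd_mul (hd _ (hv.pd i)) (hd _ (by fun_prop)),
    pd_add (hd _ (by fun_prop)) (hd _ (by fun_prop)), pd_const_mul (hd _ (by fun_prop)),
    pd_mul (hd _ (hv.pd i)) (hd _ (hw.pd j)), hwjji, hvij, hess_of_eq_exp_neg hv hwv,
    pd_of_eq_exp_neg hv hwv j]
  ring

theorem sum_pd_fisherFlux_of_eq_exp_neg (hv : ContDiff ℝ ∞ v)
    (hwv : ∀ y, w y = Real.exp (-v y)) (x : Fin n → ℝ) :
    ∑ j, pd j (fisherFlux v w j) x
      = 2 * ∑ i, pd i v x * pd i (lap w) x + gradSq v x * lap w x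
        - 2 * (∑ i, ∑ j, hess i j v x ^ 2) * w x := by
  have hw := contDiff_of_eq_exp_neg hv hwv
  have hpd_lap : ∀ i, pd i (lap w) x = ∑ j, pd i (pd j (pd j w)) x := fun i =>
    pd_sum _ (fun j _ => (hw.hess j j).differentiable (by simp) x) i
  calc ∑ j, pd j (fisherFlux v w j) x
      = ∑ j, ∑ i, (2 * pd i v x * pd i (pd j (pd j w)) x + pd i v x ^ 2 * pd j (pd j w) x
          - 2 * hess i j v x ^ 2 * w x) := by
        refine Finset.sum_congr rfl fun j _ => ?_
        unfold fisherFlux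
        rw [pd_sum _ (fun i _ => (by fun_prop : ContDiff ℝ ∞ _).differentiable (by simp) x) j]
        exact Finset.sum_congr rfl fun i _ => pd_fisherFlux_summand_of_eq_exp_neg hv hwv i j x
    _ = _ := by
        rw [Finset.sum_comm, gradSq, lap, Finset.sum_mul_sum]
        simp only [hpd_lap, Finset.mul_sum, Finset.sum_mul, ← Finset.sum_add_distrib,
          ← Finset.sum_sub_distrib]
        refine Finset.sum_congr rfl fun i _ => Finset.sum_congr rfl fun j _ => ?_
        ring

end Bochner

section PeriodicIntegrals

variable {n : ℕ} {v w : (Fin n → ℝ) → ℝ}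

theorem Function.Periodic.pd {g : (Fin n → ℝ) → ℝ} {c : Fin n → ℝ} (hg : Function.Periodic g c)
    (i : Fin n) : Function.Periodic (pd i g) c := by
  intro x
  have htranslate : (fun y => g (y + c)) = g := funext hg
  rw [_root_.pd, ← fderiv_comp_add_right, htranslate, _root_.pd]

theorem Function.Periodic.of_forall_int {g : (Fin n → ℝ) → ℝ}
    (hg : ∀ x (m : Fin n → ℤ), g (x + fun i => (m i : ℝ)) = g x) (j : Fin n) :
    Function.Periodic g (Pi.single j 1) := fun x => by
  have hcast : (fun i => ((Pi.single j 1 : Fin n → ℤ) i : ℝ)) = Pi.single j 1 := by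
    ext i
    by_cases h : i = j <;> simp [h]
  rw [← hcast, hg]

theorem Fin.insertNth_one_eq_insertNth_zero_add {m : ℕ} (j : Fin (m + 1)) (y : Fin m → ℝ) :
    Fin.insertNth (α := fun _ => ℝ) j 1 y
      = Fin.insertNth (α := fun _ => ℝ) j 0 y + Pi.single j 1 := by
  ext k
  cases k using Fin.succAboveCases j <;> simp

theorem integral_sum_pd_eq_zero_of_periodic {V : Fin n → (Fin n → ℝ) → ℝ}
    (hV : ∀ j, ContDiff ℝ 1 (V j)) (hper : ∀ j, Function.Periodic (V j) (Pi.single j 1)) :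
    ∫ x in Set.Icc (0 : Fin n → ℝ) 1, ∑ j, pd j (V j) x = 0 := by
  cases n with
  | zero => simp
  | succ m =>
    simp only [pd]
    have hcont : Continuous fun x => ∑ j, fderiv ℝ (V j) x (Pi.single j 1) :=
      continuous_finsetSum _ fun j _ =>
        ((hV j).continuous_fderiv one_ne_zero).clm_apply continuous_const
    rw [integral_divergence_of_hasFDerivAt_off_countable' 0 1 zero_le_one V
      (fun j x => fderiv ℝ (V j) x) ∅ Set.countable_empty
      (fun j => (hV j).continuous.continuousOn)
      (fun x _ j => ((hV j).differentiable one_ne_zero x).hasFDerivAt)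
      (hcont.continuousOn.integrableOn_compact isCompact_Icc)]
    refine Finset.sum_eq_zero fun j _ => sub_eq_zero.2 <|
      setIntegral_congr_fun measurableSet_Icc fun y _ => ?_
    simp only [Pi.one_apply, Pi.zero_apply, Fin.insertNth_one_eq_insertNth_zero_add, hper j _]

theorem integral_lap_eq_zero_of_periodic (hw : ContDiff ℝ ∞ w)
    (hper : ∀ j, Function.Periodic w (Pi.single j 1)) :
    ∫ x in Set.Icc (0 : Fin n → ℝ) 1, lap w x = 0 :=
  integral_sum_pd_eq_zero_of_periodic (fun j => (hw.pd j).of_le (by norm_cast))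
    fun j => (hper j).pd j

theorem integral_fisher_dissipation_of_eq_exp_neg (hv : ContDiff ℝ ∞ v)
    (hper : ∀ j, Function.Periodic v (Pi.single j 1)) (hwv : ∀ y, w y = Real.exp (-v y)) :
    ∫ x in Set.Icc (0 : Fin n → ℝ) 1, (2 * ∑ i, pd i v x * pd i (lap w) x
      + gradSq v x * lap w x - 2 * (∑ i, ∑ j, hess i j v x ^ 2) * w x) = 0 := by
  have hw := contDiff_of_eq_exp_neg hv hwv
  have hwper : ∀ j, Function.Periodic w (Pi.single j 1) := fun j => (hper j).of_eq_exp_neg hwv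
  simp_rw [← sum_pd_fisherFlux_of_eq_exp_neg hv hwv]
  unfold fisherFlux
  refine integral_sum_pd_eq_zero_of_periodic (fun j => ?_) fun j y => ?_
  · exact (by fun_prop : ContDiff ℝ ∞ _).of_le (by norm_cast)
  · simp only [((hper j).pd _) y, ((hwper j).pd _) y, ((hwper j).pd _).pd _ y, hess]

end PeriodicIntegrals

theorem sum_sum_sub_mul_ite_sq {ι : Type*} [Fintype ι] [DecidableEq ι] (a : ι → ι → ℝ) (c : ℝ) :
    ∑ i, ∑ j, (a i j - c * (if i = j then 1 else 0)) ^ 2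
      = ∑ i, ∑ j, a i j ^ 2 - 2 * c * ∑ i, a i i + Fintype.card ι * c ^ 2 := by
  have hexpand : ∀ i j, (a i j - c * (if i = j then 1 else 0)) ^ 2
      = a i j ^ 2 - (if i = j then 2 * c * a i i - c ^ 2 else 0) := by
    intro i j
    split_ifs with h
    · subst h; ring
    · ring
  simp only [hexpand, Finset.sum_sub_distrib, Finset.sum_ite_eq, Finset.mem_univ, if_true,
    Finset.mul_sum, Finset.sum_const, Finset.card_univ, nsmul_eq_mul]
  ring

section EntropyProduction

variable {n : ℕ} {v w : (Fin n → ℝ) → ℝ}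

theorem integral_entropy_production (hv : ContDiff ℝ ∞ v)
    (hper : ∀ j, Function.Periodic v (Pi.single j 1)) (hwv : ∀ y, w y = Real.exp (-v y))
    {t : ℝ} (ht : t ≠ 0) :
    ∫ x in Set.Icc (0 : Fin n → ℝ) 1, (2 * t * gradSq w x / w x
        + t ^ 2 * (2 * (∑ i, pd i w x * pd i (lap w) x) / w x - gradSq w x * lap w x / w x ^ 2)
        - 2 * n * w x - 2 * n * t * lap w x)
      = -2 * t ^ 2 * ∫ x in Set.Icc (0 : Fin n → ℝ) 1,
          ((∑ i, ∑ j, (hess i j v x - (1 / t) * (if i = j then (1:ℝ) else 0)) ^ 2)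
            + gradSq v x / t) * Real.exp (-(v x)) := by
  have hw := contDiff_of_eq_exp_neg hv hwv
  set Q : (Fin n → ℝ) → ℝ := fun x =>
    ((∑ i, ∑ j, (hess i j v x - (1 / t) * (if i = j then (1:ℝ) else 0)) ^ 2)
      + gradSq v x / t) * Real.exp (-(v x))
  set D : (Fin n → ℝ) → ℝ := fun x => 2 * ∑ i, pd i v x * pd i (lap w) x
      + gradSq v x * lap w x - 2 * (∑ i, ∑ j, hess i j v x ^ 2) * w x
  have hpointwise : ∀ x, 2 * t * gradSq w x / w x
        + t ^ 2 * (2 * (∑ i, pd i w x * pd i (lap w) x) / w x - gradSq w x * lap w x / w x ^ 2)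
        - 2 * n * w x - 2 * n * t * lap w x
      = -2 * t ^ 2 * Q x - t ^ 2 * D x + (4 - 2 * n) * t * lap w x := by
    intro x
    have hw0 : w x ≠ 0 := by rw [hwv]; positivity
    have htrace := sum_sum_sub_mul_ite_sq (fun i j => hess i j v x) (1 / t)
    simp only [Fintype.card_fin, show ∑ i, hess i i v x = lap v x from rfl] at htrace
    have hX : ∑ i, pd i w x * pd i (lap w) x = -w x * ∑ i, pd i v x * pd i (lap w) x := by
      simp only [pd_of_eq_exp_neg hv hwv, Finset.mul_sum]
      exact Finset.sum_congr rfl fun i _ => by ring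
    simp only [Q, D, htrace, ← hwv, hX, gradSq_of_eq_exp_neg hv hwv]
    rw [lap_of_eq_exp_neg hv hwv x]
    field_simp
    ring
  have hint : ∀ φ : (Fin n → ℝ) → ℝ, Continuous φ → IntegrableOn φ (Set.Icc 0 1) :=
    fun φ hφ => hφ.continuousOn.integrableOn_compact isCompact_Icc
  calc _ = ∫ x in Set.Icc (0 : Fin n → ℝ) 1,
        (-2 * t ^ 2 * Q x - t ^ 2 * D x + (4 - 2 * n) * t * lap w x) :=
        setIntegral_congr_fun measurableSet_Icc fun x _ => hpointwise x
    _ = -2 * t ^ 2 * (∫ x in Set.Icc (0 : Fin n → ℝ) 1, Q x)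
        - t ^ 2 * (∫ x in Set.Icc (0 : Fin n → ℝ) 1, D x)
        + (4 - 2 * n) * t * ∫ x in Set.Icc (0 : Fin n → ℝ) 1, lap w x := by
        rw [integral_add, integral_sub, integral_const_mul, integral_const_mul,
          integral_const_mul] <;> exact hint _ (by fun_prop)
    _ = _ := by
        rw [integral_fisher_dissipation_of_eq_exp_neg hv hper hwv,
          integral_lap_eq_zero_of_periodic hw fun j => (hper j).of_eq_exp_neg hwv]
        ring

end EntropyProduction

section TimeDerivatives

variable {E : Type*} [NormedAddCommGroup E] [NormedSpace ℝ E] {g : ℝ → E → ℝ} {t : ℝ} {x : E}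

theorem hasDerivAt_of_differentiableAt_uncurry
    (hg : DifferentiableAt ℝ (Function.uncurry g) (t, x)) :
    HasDerivAt (fun s => g s x) (fderiv ℝ (Function.uncurry g) (t, x) (1, 0)) t := by
  exact hg.hasFDerivAt.comp_hasDerivAt t ((hasDerivAt_id t).prodMk (hasDerivAt_const t x))

theorem fderiv_apply_eq_fderiv_uncurry (hg : DifferentiableAt ℝ (Function.uncurry g) (t, x))
    (v : E) : fderiv ℝ (g t) x v = fderiv ℝ (Function.uncurry g) (t, x) (0, v) := by
  rw [show g t = Function.uncurry g ∘ Prod.mk t from rfl,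
    (hg.hasFDerivAt.comp x (hasFDerivAt_prodMk_right t x)).fderiv]
  rfl

variable {I : Set ℝ}

theorem differentiableAt_uncurry_of_contDiffOn {k : WithTop ℕ∞} (hI : IsOpen I)
    (hg : ContDiffOn ℝ k (Function.uncurry g) (I ×ˢ Set.univ)) (hk : k ≠ 0) (ht : t ∈ I)
    (x : E) : DifferentiableAt ℝ (Function.uncurry g) (t, x) :=
  (hg.contDiffAt (prod_mem_nhds (hI.mem_nhds ht) Filter.univ_mem)).differentiableAt hk

theorem ContDiffOn.contDiff_apply_of_uncurry {k : WithTop ℕ∞}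
    (hg : ContDiffOn ℝ k (Function.uncurry g) (I ×ˢ Set.univ)) (ht : t ∈ I) :
    ContDiff ℝ k (g t) :=
  contDiffOn_univ.1 <| hg.comp (contDiff_const.prodMk contDiff_id).contDiffOn
    fun y _ => ⟨ht, Set.mem_univ y⟩

theorem hasDerivAt_setIntegral_of_contDiffOn_uncurry [MeasurableSpace E]
    [OpensMeasurableSpace E] {μ : Measure E} [IsFiniteMeasureOnCompacts μ] {K : Set E}
    (hK : IsCompact K) (hI : IsOpen I)
    (hg : ContDiffOn ℝ 1 (Function.uncurry g) (I ×ˢ Set.univ)) (ht : t ∈ I) :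
    HasDerivAt (fun s => ∫ x in K, g s x ∂μ) (∫ x in K, deriv (fun s => g s x) t ∂μ) t := by
  obtain ⟨δ, hδ, hball⟩ := Metric.isOpen_iff.1 hI t ht
  have hδ2 : Metric.closedBall t (δ / 2) ⊆ I :=
    (Metric.closedBall_subset_ball (half_lt_self hδ)).trans hball
  have hsub : Metric.closedBall t (δ / 2) ×ˢ K ⊆ I ×ˢ Set.univ :=
    Set.prod_mono hδ2 (Set.subset_univ K)
  set g' : ℝ → E → ℝ := fun s x => fderiv ℝ (Function.uncurry g) (s, x) (1, 0)
  have hg'cont : ContinuousOn (Function.uncurry g') (I ×ˢ Set.univ) :=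
    (hg.continuousOn_fderiv_of_isOpen (hI.prod isOpen_univ) le_rfl).clm_apply continuousOn_const
  obtain ⟨C, hC⟩ := ((isCompact_closedBall t (δ / 2)).prod hK).exists_bound_of_continuousOn
    (hg'cont.mono hsub)
  have hslice : ∀ s ∈ I, ContinuousOn (g s) K := fun s hs =>
    (hg.continuousOn.comp_continuous (continuous_const.prodMk continuous_id)
      fun y => ⟨hs, Set.mem_univ y⟩).continuousOn
  have hderiv : ∀ s ∈ I, ∀ x, HasDerivAt (fun s => g s x) (g' s x) s := fun s hs x =>
    hasDerivAt_of_differentiableAt_uncurry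
      (differentiableAt_uncurry_of_contDiffOn hI hg one_ne_zero hs x)
  have : IsFiniteMeasure (μ.restrict K) := isFiniteMeasure_restrict.2 hK.measure_lt_top.ne
  have key := hasDerivAt_integral_of_dominated_loc_of_deriv_le (μ := μ.restrict K)
    (F := g) (F' := g') (x₀ := t) (bound := fun _ => C)
    (Metric.closedBall_mem_nhds t (half_pos hδ))
    (Filter.eventually_of_mem (hI.mem_nhds ht) fun s hs =>
      (hslice s hs).aestronglyMeasurable hK.measurableSet)
    ((hslice t ht).integrableOn_compact hK)
    ((hg'cont.comp_continuous (continuous_const.prodMk continuous_id)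
      fun y => ⟨ht, Set.mem_univ y⟩).aestronglyMeasurable)
    ((ae_restrict_iff' hK.measurableSet).2 <| Filter.Eventually.of_forall fun x hx s hs =>
      hC (s, x) ⟨hs, hx⟩)
    (integrable_const C)
    (Filter.Eventually.of_forall fun x s hs => hderiv s (hδ2 hs) x)
  rw [setIntegral_congr_fun hK.measurableSet fun x _ => (hderiv t ht x).deriv]
  exact key.2

end TimeDerivatives

section HeatFlow

variable {n : ℕ} {I : Set ℝ} {g : ℝ → (Fin n → ℝ) → ℝ} {t : ℝ}

theorem ContDiffOn.uncurry_pd (hI : IsOpen I)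
    (hg : ContDiffOn ℝ ∞ (Function.uncurry g) (I ×ˢ Set.univ)) (i : Fin n) :
    ContDiffOn ℝ ∞ (Function.uncurry fun s => pd i (g s)) (I ×ˢ Set.univ) := by
  refine ((hg.fderiv_of_isOpen (hI.prod isOpen_univ) le_rfl).clm_apply
    (contDiffOn_const (c := ((0 : ℝ), (Pi.single i 1 : Fin n → ℝ))))).congr ?_
  rintro ⟨s, y⟩ ⟨hs, -⟩
  exact fderiv_apply_eq_fderiv_uncurry
    (differentiableAt_uncurry_of_contDiffOn hI hg (by simp) hs y) _

theorem hasDerivAt_pd_of_contDiffOn_uncurry (hI : IsOpen I)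
    (hg : ContDiffOn ℝ 2 (Function.uncurry g) (I ×ˢ Set.univ)) (ht : t ∈ I) (i : Fin n)
    (x : Fin n → ℝ) :
    HasDerivAt (fun s => pd i (g s) x) (pd i (fun y => deriv (fun s => g s y) t) x) t := by
  have hUopen : IsOpen (I ×ˢ (Set.univ : Set (Fin n → ℝ))) := hI.prod isOpen_univ
  have hU : I ×ˢ Set.univ ∈ nhds (t, x) := hUopen.mem_nhds ⟨ht, Set.mem_univ x⟩
  set D := fderiv ℝ (Function.uncurry g)
  have hD : DifferentiableAt ℝ D (t, x) :=
    ((hg.fderiv_of_isOpen hUopen (m := 1) le_rfl).contDiffAt hU).differentiableAt one_ne_zero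
  have hDapply : ∀ v, DifferentiableAt ℝ (fun p => D p v) (t, x) := fun v =>
    hD.clm_apply (differentiableAt_const v)
  have huncurry : ∀ v, Function.uncurry (fun s y => D (s, y) v) = fun p => D p v := fun v => rfl
  have hsymm : IsSymmSndFDerivAt ℝ (Function.uncurry g) (t, x) :=
    (hg.contDiffAt hU).isSymmSndFDerivAt (by simp)
  have hdt : (fun y => deriv (fun s => g s y) t) = fun y => D (t, y) (1, 0) := funext fun y =>
    (hasDerivAt_of_differentiableAt_uncurry
      (differentiableAt_uncurry_of_contDiffOn hI hg two_ne_zero ht y)).deriv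
  have hslice : (fun s => pd i (g s) x) =ᶠ[nhds t] fun s => D (s, x) (0, Pi.single i 1) :=
    Filter.eventually_of_mem (hI.mem_nhds ht) fun s hs => fderiv_apply_eq_fderiv_uncurry
      (differentiableAt_uncurry_of_contDiffOn hI hg two_ne_zero hs x) _
  have hvalue :
      pd i (fun y => D (t, y) (1, 0)) x = fderiv ℝ D (t, x) (1, 0) (0, Pi.single i 1) := by
    rw [pd, fderiv_apply_eq_fderiv_uncurry (g := fun s y => D (s, y) (1, 0)) (hDapply _),
      huncurry, fderiv_clm_apply hD (differentiableAt_const _)]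
    simpa using hsymm (0, Pi.single i 1) (1, 0)
  rw [hdt, hvalue]
  refine HasDerivAt.congr_of_eventuallyEq ?_ hslice
  have := hasDerivAt_of_differentiableAt_uncurry (g := fun s y => D (s, y) (0, Pi.single i 1))
    (hDapply _)
  simpa [huncurry, fderiv_clm_apply hD (differentiableAt_const _)] using this

theorem contDiffOn_entropy_density (hI : IsOpen I)
    (hg : ContDiffOn ℝ ∞ (Function.uncurry g) (I ×ˢ Set.univ)) (hg0 : ∀ s ∈ I, ∀ x, g s x ≠ 0)
    (c : ℝ) :
    ContDiffOn ℝ ∞ (Function.uncurry fun s x => s ^ 2 * gradSq (g s) x / g s x - c * s * g s x)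
      (I ×ˢ Set.univ) := by
  have hfst : ContDiffOn ℝ ∞ (fun p : ℝ × (Fin n → ℝ) => p.1) (I ×ˢ Set.univ) :=
    contDiff_fst.contDiffOn
  refine ContDiffOn.sub (ContDiffOn.div ?_ hg fun p hp => hg0 p.1 hp.1 p.2)
    ((contDiffOn_const.mul hfst).mul hg)
  exact (hfst.pow 2).mul (ContDiffOn.sum fun i _ => (hg.uncurry_pd hI i).pow 2)

theorem hasDerivAt_entropy_density (hI : IsOpen I)
    (hg : ContDiffOn ℝ 2 (Function.uncurry g) (I ×ˢ Set.univ)) (ht : t ∈ I)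
    (hheat : ∀ y, deriv (fun s => g s y) t = lap (g t) y) {x : Fin n → ℝ} (hx : g t x ≠ 0)
    (c : ℝ) :
    HasDerivAt (fun s => s ^ 2 * gradSq (g s) x / g s x - c * s * g s x)
      (2 * t * gradSq (g t) x / g t x
        + t ^ 2 * (2 * (∑ i, pd i (g t) x * pd i (lap (g t)) x) / g t x
          - gradSq (g t) x * lap (g t) x / g t x ^ 2)
        - c * g t x - c * t * lap (g t) x) t := by
  have hval : HasDerivAt (fun s => g s x) (lap (g t) x) t := by
    rw [← hheat x]
    exact (hasDerivAt_of_differentiableAt_uncurry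
      (differentiableAt_uncurry_of_contDiffOn hI hg two_ne_zero ht x)).differentiableAt.hasDerivAt
  have hpd : ∀ i, HasDerivAt (fun s => pd i (g s) x) (pd i (lap (g t)) x) t := fun i => by
    simpa only [funext hheat] using hasDerivAt_pd_of_contDiffOn_uncurry hI hg ht i x
  have hgradSq : HasDerivAt (fun s => gradSq (g s) x)
      (2 * ∑ i, pd i (g t) x * pd i (lap (g t)) x) t := by
    refine (HasDerivAt.fun_sum (u := Finset.univ) fun i _ => (hpd i).fun_pow 2).congr_deriv ?_
    simp [Finset.mul_sum, mul_assoc]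
  refine ((((hasDerivAt_pow 2 t).fun_mul hgradSq).fun_div hval hx).fun_sub
    (((hasDerivAt_id' t).const_mul c).fun_mul hval)).congr_deriv ?_
  field_simp
  ring

end HeatFlow

theorem entropy_F_deriv_general
    (n : ℕ) (f : ℝ → (Fin n → ℝ) → ℝ)
    (hsmooth : ContDiffOn ℝ (⊤ : ℕ∞) (fun p : ℝ × (Fin n → ℝ) => f p.1 p.2)
      (Set.Ioi 0 ×ˢ Set.univ))
    (hpos : ∀ t > (0:ℝ), ∀ x : Fin n → ℝ, 0 < f t x)
    (hheat : ∀ t > (0:ℝ), ∀ x : Fin n → ℝ, deriv (fun s => f s x) t = lap (f t) x)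
    (hper : ∀ t > (0:ℝ), ∀ x : Fin n → ℝ, ∀ m : Fin n → ℤ,
      f t (x + fun i => (m i : ℝ)) = f t x)
    (u : ℝ → (Fin n → ℝ) → ℝ) (hu : ∀ t x, u t x = -Real.log (f t x))
    (F : ℝ → ℝ)
    (hF : ∀ t, F t = ∫ x in Set.Icc (0 : Fin n → ℝ) 1,
      (t ^ 2 * gradSq (u t) x - 2 * n * t) * Real.exp (-(u t x))) :
    ∀ t > (0:ℝ),
      HasDerivAt F
        (-2 * t ^ 2 * ∫ x in Set.Icc (0 : Fin n → ℝ) 1,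
          ((∑ i, ∑ j, (hess i j (u t) x - (1 / t) * (if i = j then (1:ℝ) else 0)) ^ 2)
            + gradSq (u t) x / t) * Real.exp (-(u t x))) t ∧
      (-2 * t ^ 2 * ∫ x in Set.Icc (0 : Fin n → ℝ) 1,
          ((∑ i, ∑ j, (hess i j (u t) x - (1 / t) * (if i = j then (1:ℝ) else 0)) ^ 2)
            + gradSq (u t) x / t) * Real.exp (-(u t x))) ≤ 0 := by
  intro t ht
  have hf0 : ∀ s > (0:ℝ), ∀ x, f s x ≠ 0 := fun s hs x => (hpos s hs x).ne'
  have hv : ∀ s > (0:ℝ), ContDiff ℝ ∞ (u s) := fun s hs => by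
    rw [funext (hu s)]
    exact ((hsmooth.contDiff_apply_of_uncurry hs).log (hf0 s hs)).neg
  have hwv : ∀ s > (0:ℝ), ∀ y, f s y = Real.exp (-u s y) := fun s hs y => by
    rw [hu, neg_neg, Real.exp_log (hpos s hs y)]
  have hvper : ∀ j, Function.Periodic (u t) (Pi.single j 1) := fun j y => by
    rw [hu, hu, Function.Periodic.of_forall_int (hper t ht) j y]
  have hdensity : F =ᶠ[nhds t] fun s => ∫ x in Set.Icc (0 : Fin n → ℝ) 1,
      (s ^ 2 * gradSq (f s) x / f s x - 2 * n * s * f s x) := by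
    filter_upwards [isOpen_Ioi.mem_nhds ht] with s hs
    refine (hF s).trans (setIntegral_congr_fun measurableSet_Icc fun x _ => ?_)
    rw [gradSq_of_eq_exp_neg (hv s hs) (hwv s hs), ← hwv s hs]
    field_simp [hf0 s hs x]
  have hderiv := hasDerivAt_setIntegral_of_contDiffOn_uncurry (μ := volume)
    (isCompact_Icc (a := 0) (b := 1)) isOpen_Ioi
    ((contDiffOn_entropy_density isOpen_Ioi hsmooth hf0 (2 * n)).of_le (by norm_cast)) ht
  rw [setIntegral_congr_fun measurableSet_Icc fun x _ => (hasDerivAt_entropy_density isOpen_Ioi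
    (hsmooth.of_le (by norm_cast)) ht (hheat t ht) (hf0 t ht x) (2 * n)).deriv,
    integral_entropy_production (hv t ht) hvper (hwv t ht) ht.ne'] at hderiv
  refine ⟨hderiv.congr_of_eventuallyEq hdensity, mul_nonpos_of_nonpos_of_nonneg
    (by nlinarith [sq_nonneg t]) (setIntegral_nonneg measurableSet_Icc fun x _ => ?_)⟩
  have hhess : 0 ≤ ∑ i, ∑ j, (hess i j (u t) x - (1 / t) * (if i = j then (1:ℝ) else 0)) ^ 2 :=
    Finset.sum_nonneg fun i _ => Finset.sum_nonneg fun j _ => sq_nonneg _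
  exact mul_nonneg (add_nonneg hhess (div_nonneg (gradSq_nonneg _ _) ht.le)) (Real.exp_pos _).le

/-- Derivative formula for the entropy `F`:
`dF/dt = −2t² ∫ (|∇²u − (1/t)I|² + |∇u|²/t) e^{−u} ≤ 0`. -/
theorem entropy_F_deriv
    (n : ℕ) (hn : 1 ≤ n) (f : ℝ → (Fin n → ℝ) → ℝ)
    (hsmooth : ContDiffOn ℝ (⊤ : ℕ∞) (fun p : ℝ × (Fin n → ℝ) => f p.1 p.2)
      (Set.Ioi 0 ×ˢ Set.univ))
    (hpos : ∀ t > (0:ℝ), ∀ x : Fin n → ℝ, 0 < f t x)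
    (hheat : ∀ t > (0:ℝ), ∀ x : Fin n → ℝ, deriv (fun s => f s x) t = lap (f t) x)
    (hper : ∀ t > (0:ℝ), ∀ x : Fin n → ℝ, ∀ m : Fin n → ℤ,
      f t (x + fun i => (m i : ℝ)) = f t x)
    (u : ℝ → (Fin n → ℝ) → ℝ) (hu : ∀ t x, u t x = -Real.log (f t x))
    (F : ℝ → ℝ)
    (hF : ∀ t, F t = ∫ x in Set.Icc (0 : Fin n → ℝ) 1,
      (t ^ 2 * gradSq (u t) x - 2 * n * t) * Real.exp (-(u t x))) :
    ∀ t > (0:ℝ),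
      HasDerivAt F
        (-2 * t ^ 2 * ∫ x in Set.Icc (0 : Fin n → ℝ) 1,
          ((∑ i, ∑ j, (hess i j (u t) x - (1 / t) * (if i = j then (1:ℝ) else 0)) ^ 2)
            + gradSq (u t) x / t) * Real.exp (-(u t x))) t ∧
      (-2 * t ^ 2 * ∫ x in Set.Icc (0 : Fin n → ℝ) 1,
          ((∑ i, ∑ j, (hess i j (u t) x - (1 / t) * (if i = j then (1:ℝ) else 0)) ^ 2)
            + gradSq (u t) x / t) * Real.exp (-(u t x))) ≤ 0 :=
  entropy_F_deriv_general n f hsmooth hpos hheat hper u hu F hF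
end
end
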